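/- Let (X, Y) be a random pair in ℝ^d × ℝ with P(X = 0) = 0, where ℝ^d and ℝ^{d+1} carry norms ‖·‖ such that the canonical basis vectors have norm one and ‖(x, 0)‖ = ‖x‖ for all x ∈ ℝ^d. Assume |Y| ≤ M almost surely, t ↦ P(‖X‖ > t) is regularly varying with index α > 0, and the conditional law of (t⁻¹X, Y) given ‖X‖ > t converges weakly, as t → ∞, to a probability distribution P_∞ on {(x, y) : ‖x‖ > 1}. Define Z = Y‖X‖. Then the random vector (X, Z) is regularly varying in ℝ^{d+1}: the conditional law of t⁻¹(X, Z) given ‖(X, Z)‖ > t converges weakly, as t → ∞, to a probability distribution supported on {(x, z) : ‖(x, z)‖ > 1}. -/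

import Mathlib

open MeasureTheory ProbabilityTheory Filter Set
open scoped ENNReal Topology

/-- Weak convergence, as `t → ∞`, of a family of (finite) measures to a limit measure,
tested against bounded continuous functions. -/
def TendstoWeakly {E : Type*} [MeasurableSpace E] [TopologicalSpace E]
    (μ : ℝ → Measure E) (ν : Measure E) : Prop :=
  ∀ f : BoundedContinuousFunction E ℝ,
    Filter.Tendsto (fun t => ∫ x, f x ∂(μ t)) Filter.atTop (𝓝 (∫ x, f x ∂ν))

/-- `N` is a norm function on the real vector space `E`. -/
def IsNormFun {E : Type*} [AddCommGroup E] [Module ℝ E] (N : E → ℝ) : Prop :=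
  (∀ x y, N (x + y) ≤ N x + N y) ∧ (∀ (c : ℝ) x, N (c • x) = |c| * N x) ∧
    (∀ x, x ≠ 0 → 0 < N x)

/-- The survival function of (the real random variable) `R` is regularly varying with
index `α`:  `P(R > tx)/P(R > t) → x^{-α}` for all `x > 0`. -/
def SurvivalRegVarying {Ω : Type*} [MeasureSpace Ω] (R : Ω → ℝ) (α : ℝ) : Prop :=
  ∀ x : ℝ, 0 < x → Filter.Tendsto
    (fun t => (ℙ {ω | t * x < R ω}).toReal / (ℙ {ω | t < R ω}).toReal)
    Filter.atTop (𝓝 (x ^ (-α)))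

/-!
Write `Z = Y ‖X‖` and `ψ (x, y) = ‖(x, y ‖x‖)‖`. Since `|Y| ≤ M`, for `λ > 1 + M` the event
`{‖(X, Z)‖ > t}` is, up to a null set, `{‖X‖ > s} ∩ {(s⁻¹ X, Y) ∈ A}` with `s = t / λ` and
`A = {ψ > λ}`; homogeneity then shows that the law of `t⁻¹ (X, Z)` given `‖(X, Z)‖ > t` is the
image under `q ↦ λ⁻¹ (q.1, q.2 ‖q.1‖)` of the law of `(s⁻¹ X, Y)` given `‖X‖ > s`, further
conditioned on `A`. Choosing `λ` with `P_∞ {ψ = λ} = 0` makes `A` a continuity set of `P_∞`, so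
these laws converge to the image of `P_∞ (· | A)`, as soon as `P_∞ A > 0`. That holds because `A`
contains `{‖x‖ > β}` for large `β`, which by regular variation has limit mass at least `β ^ (-α)`.
-/

open scoped BoundedContinuousFunction

namespace IsNormFun

section Module

variable {E : Type*} [AddCommGroup E] [Module ℝ E] {N : E → ℝ}

theorem map_zero (h : IsNormFun N) : N 0 = 0 := by
  simpa using h.2.1 0 0

theorem map_neg (h : IsNormFun N) (x : E) : N (-x) = N x := by
  simpa using h.2.1 (-1) x

theorem nonneg (h : IsNormFun N) (x : E) : 0 ≤ N x := by
  have := h.1 x (-x)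
  rw [add_neg_cancel, h.map_zero, h.map_neg] at this
  linarith

theorem abs_sub_le (h : IsNormFun N) (x y : E) : |N x - N y| ≤ N (x - y) := by
  have hxy := h.1 (x - y) y
  have hyx := h.1 (y - x) x
  rw [sub_add_cancel] at hxy
  rw [sub_add_cancel, ← neg_sub, h.map_neg] at hyx
  exact abs_sub_le_iff.2 ⟨by linarith, by linarith⟩

theorem map_sum_le {ι : Type*} (h : IsNormFun N) (s : Finset ι) (f : ι → E) :
    N (∑ i ∈ s, f i) ≤ ∑ i ∈ s, N (f i) :=
  Finset.le_sum_of_subadditive N h.map_zero.le h.1 s f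

theorem map_smul_of_nonneg (h : IsNormFun N) {c : ℝ} (hc : 0 ≤ c) (x : E) :
    N (c • x) = c * N x := by
  rw [h.2.1, abs_of_nonneg hc]

theorem apply_zero_left {N : E × ℝ → ℝ} (h : IsNormFun N) (h01 : N (0, 1) = 1) (z : ℝ) :
    N (0, z) = |z| := by
  simpa [h01] using h.2.1 z (0, 1)

theorem apply_le_add_abs {N : E × ℝ → ℝ} {N' : E → ℝ} (h : IsNormFun N) (h01 : N (0, 1) = 1)
    (hcompat : ∀ x, N (x, 0) = N' x) (x : E) (z : ℝ) : N (x, z) ≤ N' x + |z| := by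
  simpa [hcompat, h.apply_zero_left h01] using h.1 (x, 0) (0, z)

end Module

theorem continuous_of_le_mul_norm {E : Type*} [SeminormedAddCommGroup E] [Module ℝ E]
    {N : E → ℝ} (h : IsNormFun N) {C : ℝ} (hC : ∀ x, N x ≤ C * ‖x‖) : Continuous N :=
  (LipschitzWith.of_dist_le' fun x y => by
    rw [Real.dist_eq, dist_eq_norm]
    exact (h.abs_sub_le x y).trans (hC _)).continuous

theorem continuous_of_compat {E : Type*} [SeminormedAddCommGroup E] [Module ℝ E]
    {N : E → ℝ} {N' : E × ℝ → ℝ} (hN' : IsNormFun N') (h01 : N' (0, 1) = 1)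
    (hcompat : ∀ x, N' (x, 0) = N x) {C : ℝ} (hC : ∀ x, N x ≤ C * ‖x‖) (hC0 : 0 ≤ C) :
    Continuous N' :=
  hN'.continuous_of_le_mul_norm (C := C + 1) fun q => by
    have := hN'.apply_le_add_abs h01 hcompat q.1 q.2
    have h1 := mul_le_mul_of_nonneg_left (norm_fst_le q) hC0
    have h2 : |q.2| ≤ ‖q‖ := norm_snd_le q
    linarith [hC q.1]

theorem le_card_mul_norm {d : ℕ} {N : (Fin d → ℝ) → ℝ} (h : IsNormFun N)
    (hbasis : ∀ i, N (Pi.single i 1) = 1) (x : Fin d → ℝ) : N x ≤ d * ‖x‖ :=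
  calc N x = N (∑ i, x i • Pi.single i 1) := by
        congr 1; ext j; simp [Pi.single_apply]
    _ ≤ ∑ i, N (x i • Pi.single i 1) := h.map_sum_le _ _
    _ = ∑ i, |x i| := by simp [h.2.1, hbasis]
    _ ≤ ∑ _i : Fin d, ‖x‖ := Finset.sum_le_sum fun i _ => norm_le_pi_norm x i
    _ = d * ‖x‖ := by simp

theorem exists_pos_mul_norm_le {E : Type*} [NormedAddCommGroup E] [NormedSpace ℝ E]
    [ProperSpace E] [Nontrivial E] {N : E → ℝ} (h : IsNormFun N) (hc : Continuous N) :
    ∃ c > 0, ∀ x, c * ‖x‖ ≤ N x := by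
  obtain ⟨x₀, hx₀, hmin⟩ := (isCompact_sphere (0 : E) 1).exists_isMinOn
    (NormedSpace.sphere_nonempty.2 zero_le_one) hc.continuousOn
  have hx₀ne : x₀ ≠ 0 := ne_zero_of_mem_unit_sphere ⟨x₀, hx₀⟩
  refine ⟨N x₀, h.2.2 x₀ hx₀ne, fun x => ?_⟩
  rcases eq_or_ne x 0 with rfl | hx
  · simp [h.map_zero]
  have hnx : 0 < ‖x‖ := norm_pos_iff.2 hx
  have hmem : ‖x‖⁻¹ • x ∈ Metric.sphere (0 : E) 1 := by
    simp [norm_smul, hnx.ne']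
  have : N x₀ ≤ N (‖x‖⁻¹ • x) := hmin hmem
  rw [h.map_smul_of_nonneg (inv_nonneg.2 hnx.le), inv_mul_eq_div,
    le_div_iff₀ hnx] at this
  linarith

theorem exists_le_mul {E : Type*} [NormedAddCommGroup E] [NormedSpace ℝ E]
    [ProperSpace E] [Nontrivial E] {N : E → ℝ} (h : IsNormFun N) (hc : Continuous N)
    {N' : E → ℝ} {K : ℝ} (hK : 0 ≤ K) (hN' : ∀ x, N' x ≤ K * ‖x‖) :
    ∃ C > 0, ∀ x, N' x ≤ C * N x := by
  obtain ⟨c, hc0, hcN⟩ := h.exists_pos_mul_norm_le hc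
  refine ⟨(K + 1) / c, by positivity, fun x => ?_⟩
  calc N' x ≤ (K + 1) * ‖x‖ := (hN' x).trans (by nlinarith [norm_nonneg x])
    _ = (K + 1) / c * (c * ‖x‖) := by field_simp
    _ ≤ (K + 1) / c * N x := by gcongr; exact hcN x

end IsNormFun


noncomputable def ramp (δ : ℝ) : ℝ →ᵇ ℝ :=
  .mkOfBound ⟨fun x => max 0 (min 1 (x / δ)), by fun_prop⟩ 1 fun _ _ =>
    Real.dist_le_of_mem_Icc_01 ⟨le_max_left _ _, max_le zero_le_one (min_le_left _ _)⟩
      ⟨le_max_left _ _, max_le zero_le_one (min_le_left _ _)⟩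

theorem ramp_apply (δ x : ℝ) : ramp δ x = max 0 (min 1 (x / δ)) := rfl

namespace ramp

variable {δ : ℝ}

theorem nonneg (x : ℝ) : 0 ≤ ramp δ x := le_max_left _ _

theorem le_one (x : ℝ) : ramp δ x ≤ 1 := max_le zero_le_one (min_le_left _ _)

theorem eq_zero (hδ : 0 < δ) {x : ℝ} (hx : x ≤ 0) : ramp δ x = 0 :=
  max_eq_left ((min_le_right _ _).trans (div_nonpos_of_nonpos_of_nonneg hx hδ.le))

theorem eq_one (hδ : 0 < δ) {x : ℝ} (hx : δ ≤ x) : ramp δ x = 1 := by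
  rw [ramp_apply, min_eq_left ((one_le_div hδ).2 hx), max_eq_right zero_le_one]

theorem sub_le_indicator_closedBall (hδ : 0 < δ) (a x : ℝ) :
    ramp δ (x - a + δ) - ramp δ (x - a) ≤ (Metric.closedBall a δ).indicator (1 : ℝ → ℝ) x := by
  by_cases hx : x ∈ Metric.closedBall a δ
  · simp only [indicator_of_mem hx, Pi.one_apply]
    linarith [le_one (δ := δ) (x - a + δ), nonneg (δ := δ) (x - a)]
  · rw [indicator_of_notMem hx]
    rw [Metric.mem_closedBall, Real.dist_eq, not_le, lt_abs] at hx
    rcases hx with hx | hx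
    · rw [eq_one hδ (by linarith), eq_one hδ hx.le, sub_self]
    · rw [eq_zero hδ (by linarith), eq_zero hδ (by linarith), sub_self]

end ramp

theorem tendsto_measure_preimage_closedBall {E : Type*} [MeasurableSpace E] {ν : Measure E}
    [IsFiniteMeasure ν] {ψ : E → ℝ} (hψ : Measurable ψ) (a : ℝ) :
    Tendsto (fun δ => ν (ψ ⁻¹' Metric.closedBall a δ)) (𝓝[>] 0) (𝓝 (ν (ψ ⁻¹' {a}))) := by
  have := tendsto_measure_biInter_gt (μ := ν) (s := fun δ => ψ ⁻¹' Metric.closedBall a δ)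
    (fun _ _ => (hψ Metric.isClosed_closedBall.measurableSet).nullMeasurableSet)
    (fun _ _ _ hij => preimage_mono (Metric.closedBall_subset_closedBall hij))
    ⟨1, one_pos, measure_ne_top _ _⟩
  rwa [← preimage_iInter₂, Metric.biInter_gt_closedBall, Metric.closedBall_zero] at this

namespace TendstoWeakly

variable {E : Type*} [MeasurableSpace E] [TopologicalSpace E] {μ : ℝ → Measure E}
  {ν : Measure E}

theorem comp_tendsto (h : TendstoWeakly μ ν) {g : ℝ → ℝ} (hg : Tendsto g atTop atTop) :
    TendstoWeakly (fun t => μ (g t)) ν :=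
  fun f => (h f).comp hg

theorem congr' {μ' : ℝ → Measure E} (h : TendstoWeakly μ ν) (hμ : μ =ᶠ[atTop] μ') :
    TendstoWeakly μ' ν :=
  fun f => (h f).congr' (hμ.mono fun t ht => by rw [ht])

theorem map [OpensMeasurableSpace E] {F : Type*} [MeasurableSpace F] [TopologicalSpace F]
    [BorelSpace F] (h : TendstoWeakly μ ν) {L : E → F} (hL : Continuous L) :
    TendstoWeakly (fun t => (μ t).map L) (ν.map L) := fun f => by
  simpa only [integral_map hL.measurable.aemeasurable f.continuous.aestronglyMeasurable,
    BoundedContinuousFunction.compContinuous_apply, ContinuousMap.coe_mk]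
    using h (f.compContinuous ⟨L, hL⟩)

variable [OpensMeasurableSpace E] [∀ t, IsFiniteMeasure (μ t)] [IsFiniteMeasure ν]

theorem tendsto_integral_of_approx (h : TendstoWeakly μ ν) {f : E → ℝ}
    (hfμ : ∀ t, Integrable f (μ t)) (hfν : Integrable f ν)
    (happrox : ∀ ε > 0, ∃ k e : E →ᵇ ℝ, (∀ x, |f x - k x| ≤ e x) ∧ ∫ x, e x ∂ν < ε) :
    Tendsto (fun t => ∫ x, f x ∂μ t) atTop (𝓝 (∫ x, f x ∂ν)) := by
  have bounds : ∀ (m : Measure E) [IsFiniteMeasure m], Integrable f m →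
      ∀ k e : E →ᵇ ℝ, (∀ x, |f x - k x| ≤ e x) →
      ∫ x, (k - e) x ∂m ≤ ∫ x, f x ∂m ∧ ∫ x, f x ∂m ≤ ∫ x, (k + e) x ∂m :=
    fun m _ hf k e hke =>
      ⟨integral_mono ((k - e).integrable m) hf fun x => by
          simp only [BoundedContinuousFunction.coe_sub, Pi.sub_apply]
          linarith [(abs_le.1 (hke x)).1],
        integral_mono hf ((k + e).integrable m) fun x => by
          simp only [BoundedContinuousFunction.coe_add, Pi.add_apply]
          linarith [(abs_le.1 (hke x)).2]⟩
  have gap : ∀ k e : E →ᵇ ℝ, ∫ x, (k + e) x ∂ν - ∫ x, (k - e) x ∂ν = 2 * ∫ x, e x ∂ν :=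
    fun k e => by
      simp only [BoundedContinuousFunction.coe_add, BoundedContinuousFunction.coe_sub,
        Pi.add_apply, Pi.sub_apply]
      rw [integral_add (k.integrable ν) (e.integrable ν),
        integral_sub (k.integrable ν) (e.integrable ν)]
      ring
  refine tendsto_order.2 ⟨fun a ha => ?_, fun a ha => ?_⟩
  · obtain ⟨k, e, hke, he⟩ := happrox ((∫ x, f x ∂ν - a) / 2) (by linarith)
    have hlt : a < ∫ x, (k - e) x ∂ν := by
      linarith [(bounds ν hfν k e hke).2, gap k e]
    filter_upwards [(h (k - e)).eventually (lt_mem_nhds hlt)] with t ht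
    exact ht.trans_le (bounds (μ t) (hfμ t) k e hke).1
  · obtain ⟨k, e, hke, he⟩ := happrox ((a - ∫ x, f x ∂ν) / 2) (by linarith)
    have hlt : ∫ x, (k + e) x ∂ν < a := by
      linarith [(bounds ν hfν k e hke).1, gap k e]
    filter_upwards [(h (k + e)).eventually (gt_mem_nhds hlt)] with t ht
    exact (bounds (μ t) (hfμ t) k e hke).2.trans_lt ht

variable {ψ : E → ℝ} {a : ℝ}

theorem tendsto_setIntegral_of_measure_level_eq_zero (h : TendstoWeakly μ ν)
    (hψ : Continuous ψ) (ha : ν {x | ψ x = a} = 0) (g : E →ᵇ ℝ) :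
    Tendsto (fun t => ∫ x in {x | a < ψ x}, g x ∂μ t) atTop
      (𝓝 (∫ x in {x | a < ψ x}, g x ∂ν)) := by
  have hA : MeasurableSet {x | a < ψ x} := measurableSet_lt measurable_const hψ.measurable
  simp_rw [← integral_indicator hA]
  refine h.tendsto_integral_of_approx (fun t => (g.integrable _).indicator hA)
    ((g.integrable _).indicator hA) fun ε hε => ?_
  have hstrip : Tendsto (fun δ => ‖g‖ * ν.real (ψ ⁻¹' Metric.closedBall a δ)) (𝓝[>] 0)
      (𝓝 0) := by
    have h0 := tendsto_measure_preimage_closedBall (ν := ν) hψ.measurable a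
    rw [show ν (ψ ⁻¹' {a}) = 0 from ha] at h0
    simpa [measureReal_def] using
      ((ENNReal.tendsto_toReal ENNReal.zero_ne_top).comp h0).const_mul ‖g‖
  obtain ⟨δ, hδε, hδ⟩ :=
    ((hstrip.eventually (gt_mem_nhds hε)).and self_mem_nhdsWithin).exists
  -- `g · lower` approximates `g · 1_{a < ψ}` up to `‖g‖ (upper - lower)`, which lives on the
  -- strip `|ψ - a| ≤ δ` of small `ν`-mass
  let lower : E →ᵇ ℝ := (ramp δ).compContinuous ⟨fun x => ψ x - a, by fun_prop⟩
  let upper : E →ᵇ ℝ := (ramp δ).compContinuous ⟨fun x => ψ x - a + δ, by fun_prop⟩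
  refine ⟨g * lower, ‖g‖ • (upper - lower), fun x => ?_, ?_⟩
  · have hg : |g x| ≤ ‖g‖ := g.norm_coe_le_norm x
    simp only [lower, upper, BoundedContinuousFunction.coe_mul,
      BoundedContinuousFunction.coe_smul, BoundedContinuousFunction.coe_sub,
      BoundedContinuousFunction.compContinuous_apply, ContinuousMap.coe_mk, Pi.mul_apply,
      Pi.sub_apply, smul_eq_mul]
    by_cases hx : a < ψ x
    · rw [indicator_of_mem (show x ∈ {x | a < ψ x} from hx),
        ramp.eq_one (x := ψ x - a + δ) hδ (by linarith), ← mul_one_sub, abs_mul,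
        abs_of_nonneg (sub_nonneg.2 (ramp.le_one _))]
      exact mul_le_mul_of_nonneg_right hg (sub_nonneg.2 (ramp.le_one _))
    · rw [indicator_of_notMem (show x ∉ {x | a < ψ x} from hx),
        ramp.eq_zero (x := ψ x - a) hδ (by linarith [not_lt.1 hx])]
      simpa using mul_nonneg (norm_nonneg g) (ramp.nonneg (ψ x - a + δ))
  · have hS : MeasurableSet (ψ ⁻¹' Metric.closedBall a δ) :=
      hψ.measurable Metric.isClosed_closedBall.measurableSet
    calc ∫ x, (‖g‖ • (upper - lower)) x ∂ν
        ≤ ∫ x, ‖g‖ * (ψ ⁻¹' Metric.closedBall a δ).indicator 1 x ∂ν :=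
          integral_mono ((‖g‖ • (upper - lower)).integrable ν)
            (((integrable_const 1).indicator hS).const_mul _) fun x =>
            mul_le_mul_of_nonneg_left (ramp.sub_le_indicator_closedBall hδ a (ψ x)) (norm_nonneg g)
      _ = ‖g‖ * ν.real (ψ ⁻¹' Metric.closedBall a δ) := by
          rw [integral_const_mul, integral_indicator_one hS]
      _ < ε := hδε

theorem tendsto_measureReal_of_measure_level_eq_zero (h : TendstoWeakly μ ν)
    (hψ : Continuous ψ) (ha : ν {x | ψ x = a} = 0) :
    Tendsto (fun t => (μ t).real {x | a < ψ x}) atTop (𝓝 (ν.real {x | a < ψ x})) := by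
  simpa using h.tendsto_setIntegral_of_measure_level_eq_zero hψ ha 1

theorem cond_of_measure_level_eq_zero (h : TendstoWeakly μ ν) (hψ : Continuous ψ)
    (ha : ν {x | ψ x = a} = 0) (hpos : ν {x | a < ψ x} ≠ 0) :
    TendstoWeakly (fun t => (μ t)[|{x | a < ψ x}]) (ν[|{x | a < ψ x}]) := fun f => by
  have hcond : ∀ m : Measure E, ∫ x, f x ∂m[|{x | a < ψ x}] =
      (m.real {x | a < ψ x})⁻¹ * ∫ x in {x | a < ψ x}, f x ∂m := fun m => by
    rw [ProbabilityTheory.cond, integral_smul_measure, ENNReal.toReal_inv, smul_eq_mul,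
      measureReal_def]
  simp_rw [hcond]
  exact ((h.tendsto_measureReal_of_measure_level_eq_zero hψ ha).inv₀
    (ENNReal.toReal_ne_zero.2 ⟨hpos, measure_ne_top _ _⟩)).mul
    (h.tendsto_setIntegral_of_measure_level_eq_zero hψ ha f)

end TendstoWeakly

theorem ProbabilityTheory.cond_map {Ω Ω' : Type*} [MeasurableSpace Ω] [MeasurableSpace Ω']
    (μ : Measure Ω) {T : Ω → Ω'} (hT : Measurable T) {A : Set Ω'} (hA : MeasurableSet A) :
    (μ.map T)[|A] = (μ[|T ⁻¹' A]).map T := by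
  ext B hB
  rw [Measure.map_apply hT hB, cond_apply hA, cond_apply (hT hA), Measure.map_apply hT hA,
    Measure.map_apply hT (hA.inter hB), preimage_inter]

theorem ProbabilityTheory.cond_congr_ae {Ω : Type*} [MeasurableSpace Ω] {μ : Measure Ω}
    {s t : Set Ω} (h : s =ᵐ[μ] t) : μ[|s] = μ[|t] := by
  rw [ProbabilityTheory.cond, ProbabilityTheory.cond, Measure.restrict_congr_set h,
    measure_congr h]

def rescaleTarget {E : Type*} (N : E → ℝ) (q : E × ℝ) : E × ℝ := (q.1, q.2 * N q.1)

section RescaleTarget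

variable {E : Type*} [AddCommGroup E] [Module ℝ E] {N : E → ℝ}

theorem rescaleTarget_smul (hN : IsNormFun N) {c : ℝ} (hc : 0 ≤ c) (x : E) (y : ℝ) :
    rescaleTarget N (c • x, y) = c • rescaleTarget N (x, y) := by
  simp only [rescaleTarget, hN.map_smul_of_nonneg hc, Prod.smul_mk, smul_eq_mul]
  ring_nf

theorem IsNormFun.apply_rescaleTarget_le {N' : E × ℝ → ℝ} (hN : IsNormFun N)
    (hN' : IsNormFun N') (h01 : N' (0, 1) = 1) (hcompat : ∀ x, N' (x, 0) = N x)
    (x : E) (y : ℝ) : N' (rescaleTarget N (x, y)) ≤ (1 + |y|) * N x := by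
  have := hN'.apply_le_add_abs h01 hcompat x (y * N x)
  rw [abs_mul, abs_of_nonneg (hN.nonneg x)] at this
  simpa only [rescaleTarget, add_mul, one_mul] using this

end RescaleTarget

theorem continuous_rescaleTarget {E : Type*} [TopologicalSpace E] {N : E → ℝ}
    (hN : Continuous N) : Continuous (rescaleTarget N) :=
  continuous_fst.prodMk (continuous_snd.mul (hN.comp continuous_fst))

section Law

variable {Ω E : Type*} [MeasurableSpace Ω] {μ : Measure Ω} [IsFiniteMeasure μ]
  [NormedAddCommGroup E] [NormedSpace ℝ E] [MeasurableSpace E] [BorelSpace E]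
  {X : Ω → E} {Y : Ω → ℝ} {N : E → ℝ} {N' : E × ℝ → ℝ}

/-- If `N'(X, Z) ≤ λ N(X)`, the event `{N'(X, Z) > λ s}` is the event `{N(X) > s}`
intersected with `{λ < N'(x, y N(x))}` for `(x, y) = (s⁻¹ X, Y)`. -/
theorem map_cond_rescaleTarget_eq (hX : Measurable X) (hY : Measurable Y) (hN : IsNormFun N)
    (hNc : Continuous N) (hN' : IsNormFun N') (hN'c : Continuous N') {lam s : ℝ}
    (hlam : 0 < lam) (hs : 0 < s)
    (hdom : ∀ᵐ ω ∂μ, N' (rescaleTarget N (X ω, Y ω)) ≤ lam * N (X ω)) :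
    (μ[|{ω | lam * s < N' (rescaleTarget N (X ω, Y ω))}]).map
        (fun ω => (lam * s)⁻¹ • rescaleTarget N (X ω, Y ω)) =
      (((μ[|{ω | s < N (X ω)}]).map fun ω => (s⁻¹ • X ω, Y ω))[|
        {q | lam < N' (rescaleTarget N q)}]).map fun q => lam⁻¹ • rescaleTarget N q := by
  have hR : Continuous (rescaleTarget N) := continuous_rescaleTarget hNc
  have hT : Measurable fun ω => (s⁻¹ • X ω, Y ω) := (hX.const_smul _).prodMk hY
  have hA : MeasurableSet {q | lam < N' (rescaleTarget N q)} :=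
    measurableSet_lt measurable_const (hN'c.comp hR).measurable
  have hL : Measurable fun q => lam⁻¹ • rescaleTarget N q :=
    ((continuous_const_smul lam⁻¹).comp hR).measurable
  have hF : MeasurableSet {ω | s < N (X ω)} :=
    measurableSet_lt measurable_const (hNc.measurable.comp hX)
  have hevent : ({ω | s < N (X ω)} ∩
      (fun ω => (s⁻¹ • X ω, Y ω)) ⁻¹' {q | lam < N' (rescaleTarget N q)} : Set Ω) =ᵐ[μ]
      {ω | lam * s < N' (rescaleTarget N (X ω, Y ω))} := by
    filter_upwards [hdom] with ω hω
    simp only [eq_iff_iff]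
    change s < N (X ω) ∧ lam < N' (rescaleTarget N (s⁻¹ • X ω, Y ω)) ↔
      lam * s < N' (rescaleTarget N (X ω, Y ω))
    rw [rescaleTarget_smul hN (inv_nonneg.2 hs.le), hN'.map_smul_of_nonneg (inv_nonneg.2 hs.le),
      inv_mul_eq_div, lt_div_iff₀ hs]
    constructor
    · exact fun h => h.2
    · exact fun h => ⟨by nlinarith, h⟩
  rw [cond_map _ hT hA, cond_cond_eq_cond_inter hF (hT hA), cond_congr_ae hevent,
    Measure.map_map hL hT]
  congr 1
  ext1 ω
  simp only [Function.comp, rescaleTarget_smul hN (inv_nonneg.2 hs.le), smul_smul, mul_inv]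

end Law

theorem MeasureTheory.Measure.exists_gt_measure_level_eq_zero {α : Type*} [MeasurableSpace α]
    (ν : Measure α) [SFinite ν] {ψ : α → ℝ} (hψ : Measurable ψ) (a : ℝ) :
    ∃ b > a, ν {x | ψ x = b} = 0 := by
  by_contra! h
  have : (Ioo a (a + 1)).Countable :=
    (Measure.countable_meas_level_set_pos hψ).mono fun b hb => pos_iff_ne_zero.2 (h b hb.1)
  norm_num at this

theorem measure_map_cond_not_one_lt_eq_zero {E : Type*} [NormedAddCommGroup E]
    [NormedSpace ℝ E] [MeasurableSpace E] [BorelSpace E] {ν : Measure E} {N : E → ℝ}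
    (hN : IsNormFun N) (hNc : Continuous N) {f : E → E} (hf : Continuous f) {lam : ℝ}
    (hlam : 0 < lam) :
    ((ν[|{q | lam < N (f q)}]).map fun q => lam⁻¹ • f q) {q | ¬ 1 < N q} = 0 := by
  have hL : Measurable fun q => lam⁻¹ • f q := (hf.const_smul _).measurable
  have h : ∀ᵐ q ∂(ν[|{q | lam < N (f q)}]).map fun q => lam⁻¹ • f q, 1 < N q :=
    (ae_map_iff hL.aemeasurable (measurableSet_lt measurable_const hNc.measurable)).2
      (ae_cond_of_forall_mem (measurableSet_lt measurable_const (hNc.comp hf).measurable)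
        fun q hq => by
          rwa [hN.map_smul_of_nonneg (inv_nonneg.2 hlam.le), inv_mul_eq_div,
            one_lt_div hlam])
  exact measure_eq_zero_iff_ae_notMem.2 (h.mono fun q hq => not_not.2 hq)

section RegularVariation

variable {Ω E : Type*} [NormedAddCommGroup E] [NormedSpace ℝ E] [MeasurableSpace E]
  [BorelSpace E] {X : Ω → E} {Y : Ω → ℝ} {N : E → ℝ}

theorem div_le_measureReal_map_cond [MeasurableSpace Ω] {μ : Measure Ω} [IsFiniteMeasure μ]
    (hX : Measurable X) (hY : Measurable Y) (hN : IsNormFun N) (hNc : Continuous N)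
    {A : Set (E × ℝ)} (hA : MeasurableSet A) {s β : ℝ} (hs : 0 < s) (hβ : 1 ≤ β)
    (hsub : {q | β < N q.1} ⊆ A) :
    (μ {ω | s * β < N (X ω)}).toReal / (μ {ω | s < N (X ω)}).toReal ≤
      ((μ[|{ω | s < N (X ω)}]).map fun ω => (s⁻¹ • X ω, Y ω)).real A := by
  have hF : MeasurableSet {ω | s < N (X ω)} :=
    measurableSet_lt measurable_const (hNc.measurable.comp hX)
  have hT : Measurable fun ω => (s⁻¹ • X ω, Y ω) := (hX.const_smul _).prodMk hY
  rw [measureReal_def, Measure.map_apply hT hA, cond_apply hF,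
    ENNReal.toReal_mul, ENNReal.toReal_inv, div_eq_inv_mul]
  refine mul_le_mul_of_nonneg_left (ENNReal.toReal_mono (measure_ne_top _ _)
    (measure_mono fun ω hω => ⟨?_, hsub ?_⟩)) (inv_nonneg.2 ENNReal.toReal_nonneg)
  · change s < N (X ω)
    nlinarith [show s * β < N (X ω) from hω]
  · change β < N (s⁻¹ • X ω)
    rw [hN.map_smul_of_nonneg (inv_nonneg.2 hs.le), inv_mul_eq_div, lt_div_iff₀ hs, mul_comm]
    exact hω

/-- The limit gives `{β < N x}` mass at least `β ^ (-α)`. -/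
theorem measure_ne_zero_of_survivalRegVarying [MeasureSpace Ω]
    [IsFiniteMeasure (ℙ : Measure Ω)] (hX : Measurable X) (hY : Measurable Y)
    (hN : IsNormFun N) (hNc : Continuous N) {α : ℝ}
    (hRV : SurvivalRegVarying (fun ω => N (X ω)) α) {ν : Measure (E × ℝ)} [IsFiniteMeasure ν]
    (hconv : TendstoWeakly
      (fun t => (ℙ[|{ω | t < N (X ω)}]).map fun ω => (t⁻¹ • X ω, Y ω)) ν)
    {ψ : E × ℝ → ℝ} (hψ : Continuous ψ) {a : ℝ} (ha : ν {q | ψ q = a} = 0) {β : ℝ}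
    (hβ : 1 ≤ β) (hsub : {q | β < N q.1} ⊆ {q | a < ψ q}) :
    ν {q | a < ψ q} ≠ 0 := by
  have hle : β ^ (-α) ≤ ν.real {q | a < ψ q} :=
    le_of_tendsto_of_tendsto (hRV β (by linarith))
      (hconv.tendsto_measureReal_of_measure_level_eq_zero hψ ha)
      ((eventually_gt_atTop 0).mono fun s hs => div_le_measureReal_map_cond hX hY hN hNc
        (measurableSet_lt measurable_const hψ.measurable) hs hβ hsub)
  intro h0
  rw [measureReal_def, h0, ENNReal.toReal_zero] at hle
  linarith [Real.rpow_pos_of_pos (by linarith : 0 < β) (-α)]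

end RegularVariation

theorem rescaled_target_converse_regular_variation_general
    {Ω : Type*} [MeasureSpace Ω] [IsProbabilityMeasure (ℙ : Measure Ω)] {d : ℕ}
    (X : Ω → (Fin d → ℝ)) (Y : Ω → ℝ)
    (hXmeas : Measurable X) (hYmeas : Measurable Y)
    (Nd : (Fin d → ℝ) → ℝ) (N1 : ((Fin d → ℝ) × ℝ) → ℝ)
    (hNd : IsNormFun Nd) (hN1 : IsNormFun N1)
    (hbasis : ∀ i, Nd (Pi.single i 1) = 1) (hbasis1 : N1 (0, 1) = 1)
    (hcompat : ∀ x, N1 (x, 0) = Nd x)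
    (M : ℝ) (hM : 0 < M) (hbound : ∀ᵐ ω ∂ℙ, |Y ω| ≤ M)
    (α : ℝ)
    (hRV : SurvivalRegVarying (fun ω => Nd (X ω)) α)
    (Pinf : Measure ((Fin d → ℝ) × ℝ)) [IsProbabilityMeasure Pinf]
    (hconv : TendstoWeakly
      (fun t => Measure.map (fun ω => (t⁻¹ • X ω, Y ω)) (ℙ[|{ω | t < Nd (X ω)}]))
      Pinf) :
    ∃ Qinf : Measure ((Fin d → ℝ) × ℝ), IsProbabilityMeasure Qinf ∧
      Qinf {q | ¬ 1 < N1 q} = 0 ∧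
      TendstoWeakly
        (fun t => Measure.map
          (fun ω => t⁻¹ • (X ω, Y ω * Nd (X ω)))
          (ℙ[|{ω | t < N1 (X ω, Y ω * Nd (X ω))}]))
        Qinf := by
  have hNd_le := hNd.le_card_mul_norm hbasis
  have hNdc : Continuous Nd := hNd.continuous_of_le_mul_norm hNd_le
  have hN1c : Continuous N1 := hN1.continuous_of_compat hbasis1 hcompat hNd_le d.cast_nonneg
  have hR : Continuous (rescaleTarget Nd) := continuous_rescaleTarget hNdc
  obtain ⟨C, hC, hNd_N1⟩ := hN1.exists_le_mul hN1c d.cast_nonneg fun q =>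
    (hNd_le q.1).trans (mul_le_mul_of_nonneg_left (norm_fst_le q) d.cast_nonneg)
  obtain ⟨lam, hlam, hlev⟩ := Pinf.exists_gt_measure_level_eq_zero
    (hN1c.comp hR).measurable (1 + M)
  have hlam0 : 0 < lam := by linarith
  have hdom : ∀ᵐ ω ∂ℙ, N1 (rescaleTarget Nd (X ω, Y ω)) ≤ lam * Nd (X ω) := by
    filter_upwards [hbound] with ω hω
    exact (hNd.apply_rescaleTarget_le hN1 hbasis1 hcompat _ _).trans
      (mul_le_mul_of_nonneg_right (by linarith) (hNd.nonneg _))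
  have hpos : Pinf {q | lam < N1 (rescaleTarget Nd q)} ≠ 0 :=
    measure_ne_zero_of_survivalRegVarying hXmeas hYmeas hNd hNdc hRV hconv (hN1c.comp hR) hlev
      (le_max_left 1 (C * lam)) fun q hq => (mul_lt_mul_iff_right₀ hC).1
        (((le_max_right _ _).trans_lt hq).trans_le (hNd_N1 _))
  have := cond_isProbabilityMeasure hpos
  refine ⟨(Pinf[|{q | lam < N1 (rescaleTarget Nd q)}]).map fun q => lam⁻¹ • rescaleTarget Nd q,
    Measure.isProbabilityMeasure_map ((hR.const_smul lam⁻¹).measurable.aemeasurable),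
    measure_map_cond_not_one_lt_eq_zero hN1 hN1c hR hlam0, ?_⟩
  refine (((hconv.comp_tendsto (tendsto_id.atTop_div_const hlam0)).cond_of_measure_level_eq_zero
    (hN1c.comp hR) hlev hpos).map (hR.const_smul lam⁻¹)).congr' ?_
  filter_upwards [eventually_gt_atTop 0] with t ht
  have := map_cond_rescaleTarget_eq hXmeas hYmeas hNd hNdc hN1 hN1c hlam0 (div_pos ht hlam0) hdom
  rw [mul_div_cancel₀ t hlam0.ne'] at this
  exact this.symm

/-- **Rescaling an unbounded target, part 2 (converse).**
If `|Y| ≤ M` a.s., `t ↦ P(‖X‖ > t)` is regularly varying with index `α > 0` and the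
conditional law of `(t⁻¹X, Y)` given `‖X‖ > t` converges weakly to a probability
distribution `P_∞` on `{(x,y) : ‖x‖ > 1}`, then `(X, Z)` with `Z = Y‖X‖` is regularly
varying in `ℝ^{d+1}`: the conditional law of `t⁻¹(X,Z)` given `‖(X,Z)‖ > t` converges
weakly to a probability distribution supported on `{(x,z) : ‖(x,z)‖ > 1}`. -/
theorem rescaled_target_converse_regular_variation
    {Ω : Type*} [MeasureSpace Ω] [IsProbabilityMeasure (ℙ : Measure Ω)] {d : ℕ}
    (X : Ω → (Fin d → ℝ)) (Y : Ω → ℝ)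
    (hXmeas : Measurable X) (hYmeas : Measurable Y)
    (hX0 : ℙ {ω | X ω = 0} = 0)
    (Nd : (Fin d → ℝ) → ℝ) (N1 : ((Fin d → ℝ) × ℝ) → ℝ)
    (hNd : IsNormFun Nd) (hN1 : IsNormFun N1)
    (hbasis : ∀ i, Nd (Pi.single i 1) = 1) (hbasis1 : N1 (0, 1) = 1)
    (hcompat : ∀ x, N1 (x, 0) = Nd x)
    (M : ℝ) (hM : 0 < M) (hbound : ∀ᵐ ω ∂ℙ, |Y ω| ≤ M)
    (α : ℝ) (hα : 0 < α)
    (hRV : SurvivalRegVarying (fun ω => Nd (X ω)) α)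
    (Pinf : Measure ((Fin d → ℝ) × ℝ)) [IsProbabilityMeasure Pinf]
    (hsupp : Pinf {q | ¬ 1 < Nd q.1} = 0)
    (hconv : TendstoWeakly
      (fun t => Measure.map (fun ω => (t⁻¹ • X ω, Y ω)) (ℙ[|{ω | t < Nd (X ω)}]))
      Pinf) :
    ∃ Qinf : Measure ((Fin d → ℝ) × ℝ), IsProbabilityMeasure Qinf ∧
      Qinf {q | ¬ 1 < N1 q} = 0 ∧
      TendstoWeakly
        (fun t => Measure.map
          (fun ω => t⁻¹ • (X ω, Y ω * Nd (X ω)))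
          (ℙ[|{ω | t < N1 (X ω, Y ω * Nd (X ω))}]))
        Qinf :=
  rescaled_target_converse_regular_variation_general X Y hXmeas hYmeas Nd N1 hNd hN1 hbasis hbasis1
    hcompat M hM hbound α hRV Pinf hconv
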